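/- Contracting each micro tree of the Farzan–Munro decomposition of a binary tree into one matching pair of parentheses (replacing its left chunk by '(' and its right chunk by ')') yields the BP encoding of the top-tier tree, the binary tree obtained by contracting each micro tree into a single node. -/

import Mathlib

/-- A binary tree: `leaf` is the empty tree; each internal node has an
optional left and an optional right subtree (possibly `leaf`). -/
inductive BinTree : Type where
  | leaf : BinTree
  | node : BinTree → BinTree → BinTree
deriving DecidableEq

namespace BinTree

/-- Number of nodes of a binary tree. -/
def size : BinTree → ℕ
  | leaf => 0
  | node l r => l.size + r.size + 1

/-- BalancedBP-parenthesis encoding of binary trees: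
`BP(empty) = ε`, `BP(t) = '(' ++ BP(t_l) ++ ')' ++ BP(t_r)`.
`true` is an opening parenthesis, `false` a closing one. -/
def bp : BinTree → List Bool
  | leaf => []
  | node l r => true :: (l.bp ++ false :: r.bp)

/-- The subtree reached by following a path (`false` = left, `true` = right). -/
def subtreeAt : BinTree → List Bool → Option BinTree
  | t, [] => some t
  | leaf, _ :: _ => none
  | node l _, false :: p => subtreeAt l p
  | node _ r, true :: p => subtreeAt r p

/-- A path identifies an actual node of the tree (not an empty slot). -/
def ValidPath (t : BinTree) (p : List Bool) : Prop :=
  ∃ l r, subtreeAt t p = some (node l r)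

/-- Index (0-based) of the opening parenthesis of the node at a path. -/
def openIdx : BinTree → List Bool → Option ℕ
  | leaf, _ => none
  | node _ _, [] => some 0
  | node l _, false :: p => (openIdx l p).map (· + 1)
  | node l r, true :: p => (openIdx r p).map (· + (l.bp.length + 2))

/-- Index (0-based) of the closing parenthesis of the node at a path. -/
def closeIdx : BinTree → List Bool → Option ℕ
  | leaf, _ => none
  | node l _, [] => some (l.bp.length + 1)
  | node l _, false :: p => (closeIdx l p).map (· + 1)
  | node l r, true :: p => (closeIdx r p).map (· + (l.bp.length + 2))

/-- Inorder rank (0-based) of the node at a path. -/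
def inorderIdx : BinTree → List Bool → Option ℕ
  | leaf, _ => none
  | node l _, [] => some l.size
  | node l _, false :: p => inorderIdx l p
  | node l r, true :: p => (inorderIdx r p).map (· + (l.size + 1))

end BinTree

/-- A sequence of parentheses (`true` = '(') is balanced: equally many opening
and closing parentheses, and every prefix has at least as many opening ones. -/
def BalancedBP (s : List Bool) : Prop :=
  s.count true = s.count false ∧
  ∀ k, (s.take k).count false ≤ (s.take k).count true

/-- `excess s k`: number of opening minus closing parentheses among the first `k` symbols. -/
def excess (s : List Bool) (k : ℕ) : ℤ :=
  ((s.take k).count true : ℤ) - ((s.take k).count false : ℤ)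

/-- `IsMatch s i j`: positions `i < j` form a matching pair of parentheses
(the standard stack-based matching). -/
def IsMatch (s : List Bool) (i j : ℕ) : Prop :=
  i < j ∧ j < s.length ∧ s[i]? = some true ∧ s[j]? = some false ∧
  excess s (j + 1) = excess s i ∧
  ∀ k, i < k → k ≤ j → excess s i < excess s k

/-- `EnclosePair s i v j`: `j` is the closing parenthesis whose matching pair
tightly encloses the matching pair `(i, v)`. -/
def EnclosePair (s : List Bool) (i v j : ℕ) : Prop :=
  (∃ i', IsMatch s i' j ∧ i' < i ∧ v < j) ∧
  ∀ i'' j'', IsMatch s i'' j'' → i'' < i → v < j'' → j ≤ j''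

/-- Longest common prefix of two paths. -/
def lcp : List Bool → List Bool → List Bool
  | a :: as, b :: bs => if a = b then a :: lcp as bs else []
  | _, _ => []

/-- `M` is a micro tree of `t`: a nonempty, connected set of nodes of `t`
closed between its root and each of its members. -/
def IsMicroTree (t : BinTree) (M : Set (List Bool)) : Prop :=
  M.Nonempty ∧ (∀ p ∈ M, BinTree.ValidPath t p) ∧
  ∃ r ∈ M, ∀ p ∈ M, r <+: p ∧ ∀ q, r <+: q → q <+: p → BinTree.ValidPath t q → q ∈ M

/-- Outgoing edges of `M` towards children: nodes of `t` outside `M` whose parent is in `M`. -/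
def childEdges (t : BinTree) (M : Set (List Bool)) : Set (List Bool) :=
  {q | q ∉ M ∧ BinTree.ValidPath t q ∧ ∃ p ∈ M, ∃ b, q = p ++ [b]}

/-- The set of BP positions (opening and closing parentheses) of the nodes of `M`. -/
def bpPositions (t : BinTree) (M : Set (List Bool)) : Set ℕ :=
  {k | ∃ p ∈ M, BinTree.openIdx t p = some k ∨ BinTree.closeIdx t p = some k}

/-!
Tag every parenthesis of `bp t` with the path of its node (`BinTree.parenList`). In any BP, a node
`q` is a child of `p` exactly when the opening parenthesis of `q` immediately follows one of the
two parentheses of `p`.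

The keys of `L` list the chunks from left to right, and the tokens of two micro trees never cross:
if the root of one micro tree opens strictly inside the span of another, its whole subtree lies in
the gap between the other tree's two chunks. Non-crossing pairs form a balanced word in which the
two tokens of each micro tree match, so the word is the BP of a tree `T` (Mathlib's bijection
between Dyck words and binary trees) whose nodes are the micro trees. Finally, the symbol of `t`
just before the root of a micro tree lies in a chunk ending right there, and the token of that
chunk is exactly the token preceding the root's token in `L`.
-/

theorem List.Nodup.eq_of_getElem?_eq_some {α : Type*} {l : List α} (hl : l.Nodup) {i j : ℕ}
    {a : α} (hi : l[i]? = some a) (hj : l[j]? = some a) : i = j :=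
  (List.getElem?_inj (List.getElem?_eq_some_iff.mp hi).1 hl).mp (hi.trans hj.symm)

theorem List.Nodup.getElem?_eq_some_iff {α : Type*} {l : List α} (hl : l.Nodup) {i j : ℕ}
    {a : α} (hi : l[i]? = some a) : l[j]? = some a ↔ j = i :=
  ⟨fun hj => hl.eq_of_getElem?_eq_some hj hi, fun h => h ▸ hi⟩

theorem List.pair_infix_iff {α : Type*} {l : List α} {a b : α} :
    [a, b] <:+: l ↔ ∃ n, l[n]? = some a ∧ l[n + 1]? = some b := by
  rw [List.infix_iff_getElem?]
  constructor
  · rintro ⟨k, -, h⟩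
    exact ⟨k, by simpa using h 0 (by simp), by simpa [add_comm] using h 1 (by simp)⟩
  · rintro ⟨n, ha, hb⟩
    refine ⟨n, ?_, fun i hi => ?_⟩
    · have := (List.getElem?_eq_some_iff.mp hb).1
      simp only [List.length_cons, List.length_nil]
      omega
    · match i, hi with
      | 0, _ => simpa using ha
      | 1, _ => simpa [add_comm] using hb

section Excess

theorem excess_zero (s : List Bool) : excess s 0 = 0 := by
  simp [excess]

theorem excess_of_length_le {s : List Bool} {n : ℕ} (h : s.length ≤ n) :
    excess s n = excess s s.length := by
  simp [excess, List.take_of_length_le h]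

theorem excess_append (s s' : List Bool) (n : ℕ) :
    excess (s ++ s') n = excess s n + excess s' (n - s.length) := by
  simp only [excess, List.take_append, List.count_append]
  push_cast
  ring

theorem excess_append_append_add {pre s suf : List Bool} {n : ℕ} (hn : n ≤ s.length) :
    excess (pre ++ s ++ suf) (pre.length + n) = excess pre pre.length + excess s n := by
  rw [excess_append, excess_append, excess_of_length_le (Nat.le_add_right _ _),
    List.length_append, show pre.length + n - (pre.length + s.length) = 0 by omega, excess_zero,
    Nat.add_sub_cancel_left, add_zero]

theorem IsMatch.append_append {s : List Bool} {i j : ℕ} (h : IsMatch s i j)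
    (pre suf : List Bool) : IsMatch (pre ++ s ++ suf) (pre.length + i) (pre.length + j) := by
  obtain ⟨hij, hj, hi_open, hj_close, hret, hpos⟩ := h
  have hget : ∀ k < s.length, (pre ++ s ++ suf)[pre.length + k]? = s[k]? := fun k hk => by
    rw [List.append_assoc, List.getElem?_append_right (by omega), Nat.add_sub_cancel_left,
      List.getElem?_append_left hk]
  refine ⟨by omega, by simp only [List.length_append]; omega, by rw [hget i (by omega), hi_open],
    by rw [hget j hj, hj_close], ?_, fun k hik hkj => ?_⟩
  · rw [add_assoc, excess_append_append_add hj, excess_append_append_add (by omega), hret]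
  · obtain ⟨k, rfl⟩ := Nat.exists_eq_add_of_le (le_of_lt hik)
    rw [add_assoc, excess_append_append_add (by omega), excess_append_append_add (by omega)]
    linarith [hpos (i + k) (by omega) (by omega)]

theorem IsMatch.right_unique {s : List Bool} {i j j' : ℕ} (h : IsMatch s i j)
    (h' : IsMatch s i j') : j = j' := by
  obtain ⟨hij, -, -, -, hret, hpos⟩ := h
  obtain ⟨hij', -, -, -, hret', hpos'⟩ := h'
  by_contra hne
  rcases Nat.lt_or_gt_of_ne hne with hlt | hlt
  · exact (hpos' (j + 1) (by omega) hlt).ne' hret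
  · exact (hpos (j' + 1) (by omega) hlt).ne' hret'

theorem BalancedBP.excess_nonneg {s : List Bool} (h : BalancedBP s) (n : ℕ) :
    0 ≤ excess s n := by
  have := h.2 n
  simp only [excess, sub_nonneg]
  exact_mod_cast this

theorem balancedBP_of_excess {s : List Bool} (hnonneg : ∀ n, 0 ≤ excess s n)
    (hlength : excess s s.length = 0) : BalancedBP s := by
  simp only [excess, List.take_length, sub_eq_zero, Nat.cast_inj] at hlength
  refine ⟨hlength, fun n => ?_⟩
  have := hnonneg n
  simp only [excess, sub_nonneg] at this
  exact_mod_cast this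

end Excess

section Dyck

def toDyckStep (b : Bool) : DyckStep := if b then .U else .D

theorem toDyckStep_injective : Function.Injective toDyckStep := by
  intro a b
  cases a <;> cases b <;> simp [toDyckStep]

theorem count_map_toDyckStep (s : List Bool) (b : Bool) :
    (s.map toDyckStep).count (toDyckStep b) = s.count b :=
  List.count_map_of_injective _ _ toDyckStep_injective _

theorem balancedBP_iff_exists_dyckWord (s : List Bool) :
    BalancedBP s ↔ ∃ w : DyckWord, w.toList = s.map toDyckStep := by
  have hU := count_map_toDyckStep (b := true)
  have hD := count_map_toDyckStep (b := false)
  simp only [toDyckStep, if_true, Bool.false_eq_true, if_false] at hU hD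
  constructor
  · rintro ⟨hcount, hprefix⟩
    exact ⟨⟨s.map toDyckStep, by rw [hU, hD, hcount], fun i => by
      rw [← List.map_take, hU, hD]; exact hprefix i⟩, rfl⟩
  · rintro ⟨w, hw⟩
    refine ⟨by rw [← hU, ← hD, ← hw, w.count_U_eq_count_D], fun i => ?_⟩
    rw [← hU, ← hD, List.map_take, ← hw]
    exact w.count_D_le_count_U i

namespace BinTree

def ofBinaryTree : BinaryTree Unit → BinTree
  | .nil => leaf
  | .node _ l r => node (ofBinaryTree l) (ofBinaryTree r)

def toBinaryTree : BinTree → BinaryTree Unit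
  | leaf => .nil
  | node l r => .node () (toBinaryTree l) (toBinaryTree r)

theorem ofBinaryTree_toBinaryTree (t : BinTree) : ofBinaryTree (toBinaryTree t) = t := by
  induction t with
  | leaf => rfl
  | node l r ihl ihr => simp [toBinaryTree, ofBinaryTree, ihl, ihr]

theorem map_bp_ofBinaryTree (τ : BinaryTree Unit) :
    (bp (ofBinaryTree τ)).map toDyckStep = (DyckWord.ofTree τ).toList := by
  induction τ with
  | nil => rfl
  | node _ l r ihl ihr =>
    change _ = (DyckWord.ofTree l).nest.toList ++ (DyckWord.ofTree r).toList
    simp [ofBinaryTree, bp, ← ihl, ← ihr, toDyckStep, DyckWord.nest]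

theorem balancedBP_bp (t : BinTree) : BalancedBP (bp t) := by
  rw [balancedBP_iff_exists_dyckWord, ← ofBinaryTree_toBinaryTree t, map_bp_ofBinaryTree]
  exact ⟨_, rfl⟩

end BinTree

theorem BalancedBP.exists_bp_eq {s : List Bool} (h : BalancedBP s) :
    ∃ T : BinTree, T.bp = s := by
  obtain ⟨w, hw⟩ := (balancedBP_iff_exists_dyckWord s).mp h
  refine ⟨BinTree.ofBinaryTree w.toTree, List.map_injective_iff.mpr toDyckStep_injective ?_⟩
  rw [BinTree.map_bp_ofBinaryTree, DyckWord.ofTree_toTree, hw]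

end Dyck

namespace BinTree

/-- The parentheses of `bp t`, each tagged with the path of its node. -/
def parenList : BinTree → List (List Bool × Bool)
  | leaf => []
  | node l r => ([], true) :: ((parenList l).map (Prod.map (false :: ·) id) ++
      ([], false) :: (parenList r).map (Prod.map (true :: ·) id))

@[simp]
theorem map_snd_parenList (t : BinTree) : (parenList t).map Prod.snd = bp t := by
  induction t with
  | leaf => rfl
  | node l r ihl ihr => simp [parenList, bp, ← ihl, ← ihr, Function.comp_def]

@[simp]
theorem length_parenList (t : BinTree) : (parenList t).length = (bp t).length := by
  rw [← map_snd_parenList, List.length_map]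

theorem nodup_parenList (t : BinTree) : (parenList t).Nodup := by
  induction t with
  | leaf => exact List.nodup_nil
  | node l r ihl ihr =>
    have hinj : ∀ b : Bool, Function.Injective (Prod.map (b :: ·) (id : Bool → Bool)) :=
      fun b => Function.Injective.prodMap List.cons_injective Function.injective_id
    simp only [parenList, List.nodup_cons, List.nodup_append, List.mem_append, List.mem_cons,
      List.mem_map, ihl.map (hinj false), ihr.map (hinj true)]
    grind

theorem mem_parenList {t : BinTree} {q : List Bool} {b : Bool} :
    (q, b) ∈ parenList t ↔ ValidPath t q := by
  induction t generalizing q with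
  | leaf => cases q <;> simp [parenList, ValidPath, subtreeAt]
  | node l r ihl ihr =>
    rcases q with _ | ⟨_ | _, q⟩ <;> simp [parenList, subtreeAt, ihl, ihr, ValidPath]

theorem validPath_of_getElem? {t : BinTree} {q : List Bool} {x : ℕ} {b : Bool}
    (h : (parenList t)[x]? = some (q, b)) : ValidPath t q :=
  mem_parenList.mp (List.mem_of_getElem? h)

theorem eq_of_getElem?_parenList {t : BinTree} {p q : List Bool} {x : ℕ} {b b' : Bool}
    (hp : (parenList t)[x]? = some (p, b)) (hq : (parenList t)[x]? = some (q, b')) : p = q := by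
  simpa using congrArg (Option.map Prod.fst) (hp.symm.trans hq)

theorem getElem?_parenList_node_succ (l r : BinTree) (x : ℕ) :
    (parenList (node l r))[x + 1]? =
      if x < (bp l).length then (parenList l)[x]?.map (Prod.map (false :: ·) id)
      else if x = (bp l).length then some ([], false)
      else (parenList r)[x - (bp l).length - 1]?.map (Prod.map (true :: ·) id) := by
  simp only [parenList, List.getElem?_cons_succ, List.getElem?_append, List.length_map,
    length_parenList, List.getElem?_map]
  split_ifs with h1 h2
  · rfl
  · simp [h2]
  · rw [show x - (bp l).length = x - (bp l).length - 1 + 1 by omega, List.getElem?_cons_succ]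
    simp

theorem getElem?_parenList {t : BinTree} {q : List Bool} {x : ℕ} {b : Bool} :
    (parenList t)[x]? = some (q, b) ↔ (if b then openIdx t q else closeIdx t q) = some x := by
  cases b <;> simp only [if_true, if_false, Bool.false_eq_true] <;>
  induction t generalizing q x with
  | leaf => simp [parenList, openIdx, closeIdx]
  | node l r ihl ihr =>
    have hl : ∀ {e y}, (parenList l)[y]? = some e → y < (bp l).length :=
      fun h => by simpa using (List.getElem?_eq_some_iff.mp h).1
    rcases x with _ | x
    · rcases q with _ | ⟨_ | _, q⟩ <;> simp [parenList, openIdx, closeIdx]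
    · rw [getElem?_parenList_node_succ]
      rcases q with _ | ⟨_ | _, q⟩ <;> split_ifs <;> simp [openIdx, closeIdx, ihl, ihr]
      all_goals first
        | exact fun h => absurd (hl (ihl.mpr h)) (by omega)
        | (intros; omega)
        | exact ⟨fun h => ⟨_, h, by omega⟩, fun ⟨a, h, e⟩ => by rw [h]; congr 1; omega⟩

theorem mem_bpPositions {t : BinTree} {M : Set (List Bool)} {x : ℕ} :
    x ∈ bpPositions t M ↔ ∃ q ∈ M, ∃ b, (parenList t)[x]? = some (q, b) := by
  simp [bpPositions, getElem?_parenList, Bool.exists_bool, or_comm]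

/-- An opening parenthesis directly follows a parenthesis of its parent: the opening one of a
left child (`false`), the closing one of a right child (`true`). -/
theorem isChain_parenList (t : BinTree) :
    (parenList t).IsChain (fun e e' => e'.2 = true → e'.1 = e.1 ++ [!e.2]) := by
  have hhead : ∀ {t : BinTree} {e}, e ∈ (parenList t).head? → e = ([], true) := by
    intro t e h
    cases t <;> simp_all [parenList]
  induction t with
  | leaf => exact List.IsChain.nil
  | node l r ihl ihr =>
    simp only [parenList, List.isChain_cons, List.isChain_append, List.isChain_map]
    refine ⟨?_, ihl.imp (by simp), ⟨?_, ihr.imp (by simp)⟩, by simp⟩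
    · rcases hl : parenList l with _ | ⟨e, _⟩
      · simp
      · simp [hhead (t := l) (e := e) (by simp [hl])]
    · rcases hr : parenList r with _ | ⟨e, _⟩
      · simp
      · simp [hhead (t := r) (e := e) (by simp [hr])]

theorem fst_eq_append_of_getElem?_succ {t : BinTree} {x : ℕ} {e e' : List Bool × Bool}
    (he : (parenList t)[x]? = some e) (he' : (parenList t)[x + 1]? = some e')
    (hopen : e'.2 = true) : e'.1 = e.1 ++ [!e.2] := by
  obtain ⟨hx, rfl⟩ := List.getElem?_eq_some_iff.mp he
  obtain ⟨hx', rfl⟩ := List.getElem?_eq_some_iff.mp he'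
  exact (isChain_parenList t).getElem x hx' hopen

theorem exists_eq_append_iff {t : BinTree} {p q : List Bool} {y : ℕ}
    (hq : (parenList t)[y]? = some (q, true)) :
    (∃ bb, q = p ++ [bb]) ↔ ∃ x b, (parenList t)[x]? = some (p, b) ∧ y = x + 1 := by
  constructor
  · rintro ⟨bb, rfl⟩
    rcases y with _ | x
    · cases t <;> simp [parenList] at hq
    have hx : x < (parenList t).length := by
      have := (List.getElem?_eq_some_iff.mp hq).1
      omega
    have hp := fst_eq_append_of_getElem?_succ (List.getElem?_eq_getElem hx) hq rfl
    rw [List.append_singleton_inj] at hp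
    exact ⟨x, _, by rw [List.getElem?_eq_getElem hx, hp.1], rfl⟩
  · rintro ⟨x, b, hx, rfl⟩
    exact ⟨_, fst_eq_append_of_getElem?_succ hx hq rfl⟩

theorem exists_mem_append_iff {t : BinTree} {M : Set (List Bool)} {q : List Bool} {y : ℕ}
    (hq : (parenList t)[y]? = some (q, true)) :
    (∃ p ∈ M, ∃ bb, q = p ++ [bb]) ↔ ∃ x ∈ bpPositions t M, y = x + 1 := by
  simp only [mem_bpPositions, exists_eq_append_iff hq]
  constructor
  · rintro ⟨p, hp, x, b, hx, rfl⟩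
    exact ⟨x, ⟨p, hp, b, hx⟩, rfl⟩
  · rintro ⟨x, ⟨p, hp, b, hx⟩, rfl⟩
    exact ⟨p, hp, x, b, hx, rfl⟩

theorem exists_parenList_eq_of_subtreeAt {t u : BinTree} {p : List Bool}
    (h : subtreeAt t p = some u) :
    ∃ A B, parenList t = A ++ (parenList u).map (Prod.map (p ++ ·) id) ++ B ∧
      ∀ e ∈ A ++ B, ¬ p <+: e.1 := by
  induction p generalizing t with
  | nil =>
    obtain rfl : t = u := by simpa [subtreeAt] using h
    exact ⟨[], [], by simp [Prod.map, List.map_id''], by simp⟩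
  | cons bb p ih =>
    rcases t with _ | ⟨l, r⟩
    · cases h
    cases bb <;> obtain ⟨A, B, hlist, hout⟩ := ih h
    · refine ⟨([], true) :: A.map (Prod.map (false :: ·) id),
        B.map (Prod.map (false :: ·) id) ++
          ([], false) :: (parenList r).map (Prod.map (true :: ·) id),
        by simp [parenList, hlist, Function.comp_def], ?_⟩
      simp only [List.mem_append, List.mem_cons, List.mem_map, Prod.exists, Prod.map]
      rintro _ ((rfl | ⟨q, b, hq, rfl⟩) | ⟨q, b, hq, rfl⟩ | rfl | ⟨q, b, -, rfl⟩) <;>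
        simp only [List.cons_prefix_cons, List.prefix_nil, reduceCtorEq, Bool.false_eq_true,
          false_and, true_and, not_false_eq_true]
      exacts [hout _ (List.mem_append_left _ hq), hout _ (List.mem_append_right _ hq)]
    · refine ⟨([], true) :: (parenList l).map (Prod.map (false :: ·) id) ++ ([], false) ::
          A.map (Prod.map (true :: ·) id), B.map (Prod.map (true :: ·) id),
        by simp [parenList, hlist, Function.comp_def], ?_⟩
      simp only [List.mem_append, List.mem_cons, List.mem_map, Prod.exists, Prod.map]
      rintro _ (((rfl | ⟨q, b, -, rfl⟩) | rfl | ⟨q, b, hq, rfl⟩) | ⟨q, b, hq, rfl⟩) <;>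
        simp only [List.cons_prefix_cons, List.prefix_nil, reduceCtorEq, Bool.true_eq_false,
          false_and, true_and, not_false_eq_true]
      exacts [hout _ (List.mem_append_left _ hq), hout _ (List.mem_append_right _ hq)]

theorem exists_parenList_eq_of_getElem? {t u : BinTree} {p : List Bool} {x₀ : ℕ}
    (hu : subtreeAt t p = some u) (hp : (parenList t)[x₀]? = some (p, true)) :
    ∃ A B, parenList t = A ++ (parenList u).map (Prod.map (p ++ ·) id) ++ B ∧
      (∀ e ∈ A ++ B, ¬ p <+: e.1) ∧ A.length = x₀ := by
  obtain ⟨A, B, hlist, hout⟩ := exists_parenList_eq_of_subtreeAt hu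
  refine ⟨A, B, hlist, hout, ?_⟩
  obtain ⟨l, r, hlr⟩ := validPath_of_getElem? hp
  obtain rfl : u = node l r := Option.some_inj.mp (hu.symm.trans hlr)
  have hA : (parenList t)[A.length]? = some (p, true) := by
    simp [hlist, parenList]
  exact (nodup_parenList t).eq_of_getElem?_eq_some hA hp

theorem exists_prefix_getElem?_iff {t u : BinTree} {p : List Bool} {x₀ x : ℕ}
    (hu : subtreeAt t p = some u) (hp : (parenList t)[x₀]? = some (p, true)) :
    (∃ q b, p <+: q ∧ (parenList t)[x]? = some (q, b)) ↔
      x₀ ≤ x ∧ x < x₀ + (bp u).length := by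
  obtain ⟨A, B, hlist, hout, rfl⟩ := exists_parenList_eq_of_getElem? hu hp
  have hM : ((parenList u).map (Prod.map (p ++ ·) id)).length = (bp u).length := by simp
  rw [hlist]
  constructor
  · rintro ⟨q, b, hpq, hx⟩
    by_contra hrange
    refine hout (q, b) ?_ hpq
    rcases Nat.lt_or_ge x A.length with h | h
    · rw [List.append_assoc, List.getElem?_append_left h] at hx
      exact List.mem_append_left _ (List.mem_of_getElem? hx)
    · rw [List.getElem?_append_right (by rw [List.length_append, hM]; omega)] at hx
      exact List.mem_append_right _ (List.mem_of_getElem? hx)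
  · rintro ⟨h1, h2⟩
    rw [List.getElem?_append_left (by rw [List.length_append, hM]; omega),
      List.getElem?_append_right h1, List.getElem?_map,
      List.getElem?_eq_getElem (by rw [length_parenList]; omega)]
    exact ⟨_, _, List.prefix_append _ _, rfl⟩

theorem le_of_prefix {t : BinTree} {p q : List Bool} {x₀ x : ℕ} {b : Bool}
    (hp : (parenList t)[x₀]? = some (p, true)) (hpq : p <+: q)
    (hq : (parenList t)[x]? = some (q, b)) : x₀ ≤ x := by
  obtain ⟨l, r, hu⟩ := validPath_of_getElem? hp
  exact ((exists_prefix_getElem?_iff hu hp).mp ⟨q, b, hpq, hq⟩).1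

theorem isMatch_bp_node (l r : BinTree) : IsMatch (bp (node l r)) 0 ((bp l).length + 1) := by
  have hl := balancedBP_bp l
  have hin : ∀ n ≤ (bp l).length, excess (bp (node l r)) (n + 1) = 1 + excess (bp l) n :=
    fun n hn => by
      rw [show bp (node l r) = [true] ++ bp l ++ (false :: bp r) from rfl, add_comm n,
        ← List.length_singleton (a := true), excess_append_append_add hn]
      simp [excess]
  refine ⟨by omega, by simp [bp], by simp [bp], by simp [bp], ?_, fun k hk hkl => ?_⟩
  · rw [show (bp l).length + 1 + 1 = ([true] ++ bp l).length + 1 by simp,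
      show bp (node l r) = ([true] ++ bp l) ++ [false] ++ bp r by simp [bp],
      excess_append_append_add (by simp), excess_append, excess_zero]
    simp [excess, hl.1]
  · obtain ⟨n, rfl⟩ := Nat.exists_eq_add_of_le' hk
    rw [hin n (by omega), excess_zero]
    linarith [hl.excess_nonneg n]

theorem isMatch_of_getElem? {t : BinTree} {q : List Bool} {x y : ℕ}
    (hx : (parenList t)[x]? = some (q, true)) (hy : (parenList t)[y]? = some (q, false)) :
    IsMatch (bp t) x y := by
  obtain ⟨l, r, hu⟩ := validPath_of_getElem? hx
  obtain ⟨A, B, hlist, -, rfl⟩ := exists_parenList_eq_of_getElem? hu hx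
  have hclose : (parenList t)[A.length + ((bp l).length + 1)]? = some (q, false) := by
    rw [hlist, List.append_assoc, List.getElem?_append_right (by omega), Nat.add_sub_cancel_left,
      List.getElem?_append_left (by simp [bp])]
    simp [parenList]
  obtain rfl := (nodup_parenList t).eq_of_getElem?_eq_some hy hclose
  have hbp : bp t = A.map Prod.snd ++ bp (node l r) ++ B.map Prod.snd := by
    rw [← map_snd_parenList, hlist, ← map_snd_parenList]
    simp [Function.comp_def]
  simpa [hbp] using (isMatch_bp_node l r).append_append (A.map Prod.snd) (B.map Prod.snd)

end BinTree

section SortedKeys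

variable {β : Type*} {L : List (ℕ × β)}

theorem fst_lt_fst_iff (hs : (L.map Prod.fst).SortedLT) {k k' : ℕ} (hk : k < L.length)
    (hk' : k' < L.length) : L[k].1 < L[k'].1 ↔ k < k' := by
  have := hs.getElem_lt_getElem_iff (i := k) (j := k') (hi := by simpa) (hj := by simpa)
  rwa [List.getElem_map, List.getElem_map] at this

theorem fst_le_fst_iff (hs : (L.map Prod.fst).SortedLT) {k k' : ℕ} (hk : k < L.length)
    (hk' : k' < L.length) : L[k].1 ≤ L[k'].1 ↔ k ≤ k' := by
  rw [← not_lt, fst_lt_fst_iff hs hk' hk, not_lt]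

theorem take_eq_filter {n y : ℕ} (hlt : ∀ k (hk : k < L.length), k < n → L[k].1 < y)
    (hge : ∀ k (hk : k < L.length), n ≤ k → y ≤ L[k].1) :
    L.take n = L.filter (·.1 < y) := by
  conv_rhs => rw [← List.take_append_drop n L]
  rw [List.filter_append, List.filter_eq_self.mpr, List.filter_eq_nil_iff.mpr, List.append_nil]
  · intro e he
    obtain ⟨k, hk, rfl⟩ := List.mem_drop_iff_getElem.mp he
    simpa using hge _ _ (Nat.le_add_right _ _)
  · intro e he
    obtain ⟨k, hk, rfl⟩ := List.mem_take_iff_getElem.mp he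
    simpa using hlt _ _ (by omega)

theorem take_eq_filter_getElem (hs : (L.map Prod.fst).SortedLT) {n : ℕ} (hn : n < L.length) :
    L.take n = L.filter (·.1 < L[n].1) :=
  take_eq_filter (fun _ hk hkn => (fst_lt_fst_iff hs hk hn).mpr hkn)
    (fun _ hk hnk => (fst_le_fst_iff hs hn hk).mpr hnk)

theorem exists_take_eq_filter (hs : (L.map Prod.fst).SortedLT) (n : ℕ) :
    ∃ y, L.take n = L.filter (·.1 < y) := by
  rcases lt_or_ge n L.length with hn | hn
  · exact ⟨_, take_eq_filter_getElem hs hn⟩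
  · refine ⟨(L.map Prod.fst).sum + 1,
      take_eq_filter (fun k hk _ => ?_) (fun k hk h => by omega)⟩
    have := List.le_sum_of_mem (List.mem_map_of_mem (f := Prod.fst) (List.getElem_mem hk))
    omega

theorem fst_lt_fst_of_pair_infix (hs : (L.map Prod.fst).SortedLT) {e e' : ℕ × β}
    (h : [e, e'] <:+: L) : e.1 < e'.1 ∧ ∀ f ∈ L, f.1 ≤ e.1 ∨ e'.1 ≤ f.1 := by
  obtain ⟨n, hn, hn'⟩ := List.pair_infix_iff.mp h
  obtain ⟨hnlt, rfl⟩ := List.getElem?_eq_some_iff.mp hn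
  obtain ⟨hnlt', rfl⟩ := List.getElem?_eq_some_iff.mp hn'
  refine ⟨(fst_lt_fst_iff hs hnlt hnlt').mpr (by omega), fun f hf => ?_⟩
  obtain ⟨m, hm, rfl⟩ := List.getElem_of_mem hf
  rcases le_or_gt m n with hmn | hmn
  · exact Or.inl ((fst_le_fst_iff hs hm hnlt).mpr hmn)
  · exact Or.inr ((fst_le_fst_iff hs hnlt' hm).mpr hmn)

theorem exists_pair_infix (hs : (L.map Prod.fst).SortedLT) {e' f : ℕ × β} (he' : e' ∈ L)
    (hf : f ∈ L) (hlt : f.1 < e'.1) : ∃ e, [e, e'] <:+: L := by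
  obtain ⟨P, hP, rfl⟩ := List.getElem_of_mem he'
  obtain ⟨m, hm, rfl⟩ := List.getElem_of_mem hf
  obtain ⟨n, rfl⟩ : ∃ n, P = n + 1 :=
    Nat.exists_eq_succ_of_ne_zero (by have := (fst_lt_fst_iff hs hm hP).mp hlt; omega)
  exact ⟨L[n], List.pair_infix_iff.mpr ⟨n, by simp, by simp⟩⟩

end SortedKeys

section NonCrossing

open Finset

variable {ι : Type*} [Fintype ι] {o c : ι → ℕ} {L : List (ℕ × Bool)}

def IsTokenList (o c : ι → ℕ) (L : List (ℕ × Bool)) : Prop :=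
  (L : Multiset (ℕ × Bool)) =
    Multiset.map (fun i => (o i, true)) univ.val + Multiset.map (fun i => (c i, false)) univ.val

def depth (o c : ι → ℕ) (y : ℕ) : ℕ := #{i | o i < y ∧ y ≤ c i}

theorem IsTokenList.mem_iff (hL : IsTokenList o c L) {e : ℕ × Bool} :
    e ∈ L ↔ ∃ i, e = (o i, true) ∨ e = (c i, false) := by
  rw [← Multiset.mem_coe, hL]
  simp [eq_comm, exists_or]

theorem IsTokenList.countP_eq (hL : IsTokenList o c L) (P : ℕ × Bool → Prop)
    [DecidablePred P] :
    L.countP (fun e => decide (P e)) = #{i | P (o i, true)} + #{i | P (c i, false)} := by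
  rw [← Multiset.coe_countP, hL, Multiset.countP_add, Multiset.countP_map, Multiset.countP_map]
  rfl

theorem IsTokenList.excess_map_snd_eq_depth (hL : IsTokenList o c L) (hoc : ∀ i, o i < c i)
    {n y : ℕ} (hny : L.take n = L.filter (·.1 < y)) :
    excess (L.map Prod.snd) n = depth o c y := by
  have hopen := hL.countP_eq (fun e => e.2 = true ∧ e.1 < y)
  have hclose := hL.countP_eq (fun e => e.2 = false ∧ e.1 < y)
  simp only [excess, ← List.map_take, hny, List.count, List.countP_map, List.countP_filter]
  simp only [Bool.decide_and, Bool.decide_eq_true, true_and, Bool.false_eq_true, false_and,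
    filter_false, card_empty, add_zero, Bool.decide_eq_false, Bool.true_eq_false, zero_add,
    beq_true, Function.comp_apply, beq_false] at hopen hclose ⊢
  have hsplit : #{i | o i < y} = #{i | c i < y} + depth o c y := by
    rw [depth, ← card_filter_add_card_filter_not (s := {i | o i < y}) (fun i => c i < y),
      filter_filter, filter_filter]
    congr 2
    · ext i
      simp only [mem_filter, mem_univ, true_and, and_iff_right_iff_imp]
      exact fun h => (hoc i).trans h
    · ext i
      simp only [mem_filter, mem_univ, true_and, not_lt]
  rw [hopen, hclose, hsplit]
  push_cast
  ring

theorem IsTokenList.injective_and_ne (hL : IsTokenList o c L) (hnd : (L.map Prod.fst).Nodup) :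
    Function.Injective o ∧ ∀ i j, o i ≠ c j := by
  have hkeys : ((L.map Prod.fst : List ℕ) : Multiset ℕ) =
      Multiset.map o univ.val + Multiset.map c univ.val := by
    rw [← Multiset.map_coe, hL, Multiset.map_add, Multiset.map_map, Multiset.map_map]
    rfl
  rw [← Multiset.coe_nodup, hkeys, Multiset.nodup_add] at hnd
  refine ⟨fun i j hij => Multiset.inj_on_of_nodup_map hnd.1 i (by simp) j (by simp) hij,
    fun i j hij => ?_⟩
  exact Multiset.disjoint_left.mp hnd.2.2 (Multiset.mem_map_of_mem o (mem_univ_val i))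
    (hij ▸ Multiset.mem_map_of_mem c (mem_univ_val j))

theorem depth_eq_depth_add_one (ho : Function.Injective o) (hne : ∀ i j, o i ≠ c j)
    (hoc : ∀ i, o i < c i) (hnest : ∀ i j, o j < o i → o i < c j → c i < c j) (j : ι) :
    depth o c (o j) = depth o c (c j + 1) := by
  unfold depth
  congr 1
  ext i
  simp only [mem_filter, mem_univ, true_and]
  have := hne i j
  have := hne j i
  have := hoc j
  have := hnest i j
  have := hnest j i
  by_cases hij : i = j
  · subst hij
    omega
  · have := ho.ne hij
    omega

theorem depth_lt_depth (hne : ∀ i j, o i ≠ c j)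
    (hnest : ∀ i j, o j < o i → o i < c j → c i < c j) {j : ι} {y : ℕ} (h1 : o j < y)
    (h2 : y ≤ c j) : depth o c (o j) < depth o c y := by
  refine card_lt_card ((ssubset_iff_of_subset fun i hi => ?_).mpr ⟨j, ?_, ?_⟩)
  · simp only [mem_filter, mem_univ, true_and] at hi ⊢
    have := hnest j i
    have := hne j i
    omega
  · simp [h1, h2]
  · simp

theorem IsTokenList.balancedBP_map_snd (hL : IsTokenList o c L) (hs : (L.map Prod.fst).SortedLT)
    (hoc : ∀ i, o i < c i) : BalancedBP (L.map Prod.snd) := by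
  refine balancedBP_of_excess (fun n => ?_) ?_
  · obtain ⟨y, hy⟩ := exists_take_eq_filter hs n
    rw [hL.excess_map_snd_eq_depth hoc hy]
    positivity
  · set M := (L.map Prod.fst).sum + 1
    have hM : ∀ e ∈ L, e.1 < M := fun e he => by
      have := List.le_sum_of_mem (List.mem_map_of_mem (f := Prod.fst) he)
      omega
    have hy : L.take (L.map Prod.snd).length = L.filter (·.1 < M) :=
      take_eq_filter (fun _ hk _ => hM _ (List.getElem_mem hk))
        (fun _ hk h => by simp only [List.length_map] at h; omega)
    rw [hL.excess_map_snd_eq_depth hoc hy, Nat.cast_eq_zero, depth, card_eq_zero,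
      filter_eq_empty_iff]
    intro i _ h
    have := hM _ (hL.mem_iff.mpr ⟨i, Or.inr rfl⟩)
    simp only at this
    omega

theorem IsTokenList.isMatch (hL : IsTokenList o c L) (hs : (L.map Prod.fst).SortedLT)
    (hoc : ∀ i, o i < c i) (hnest : ∀ i j, o j < o i → o i < c j → c i < c j) {j : ι}
    {P Q : ℕ} (hP : L[P]? = some (o j, true)) (hQ : L[Q]? = some (c j, false)) :
    IsMatch (L.map Prod.snd) P Q := by
  obtain ⟨ho, hne⟩ := hL.injective_and_ne hs.nodup
  obtain ⟨hPlt, hPe⟩ := List.getElem?_eq_some_iff.mp hP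
  obtain ⟨hQlt, hQe⟩ := List.getElem?_eq_some_iff.mp hQ
  have hPQ : P < Q := (fst_lt_fst_iff hs hPlt hQlt).mp (by simp [hPe, hQe, hoc j])
  have hexP : excess (L.map Prod.snd) P = depth o c (o j) := by
    rw [hL.excess_map_snd_eq_depth hoc (take_eq_filter_getElem hs hPlt), hPe]
  refine ⟨hPQ, by simpa using hQlt, by simp [hP], by simp [hQ], ?_, fun k hPk hkQ => ?_⟩
  · have hy : L.take (Q + 1) = L.filter (·.1 < c j + 1) := by
      refine take_eq_filter (fun k hk hkQ => ?_) (fun k hk hQk => ?_)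
      · have := (fst_le_fst_iff hs hk hQlt).mpr (by omega)
        rw [hQe] at this
        omega
      · have := (fst_lt_fst_iff hs hQlt hk).mpr (by omega)
        rw [hQe] at this
        omega
    rw [hexP, hL.excess_map_snd_eq_depth hoc hy, depth_eq_depth_add_one ho hne hoc hnest j]
  · have hk : k < L.length := by omega
    rw [hexP, hL.excess_map_snd_eq_depth hoc (take_eq_filter_getElem hs hk), Nat.cast_lt]
    have h1 := (fst_lt_fst_iff hs hPlt hk).mpr hPk
    have h2 := (fst_le_fst_iff hs hk hQlt).mpr hkQ
    rw [hPe] at h1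
    rw [hQe] at h2
    exact depth_lt_depth hne hnest h1 h2

theorem IsTokenList.exists_tree_open_close (hL : IsTokenList o c L)
    (hs : (L.map Prod.fst).SortedLT) (hoc : ∀ i, o i < c i)
    (hnest : ∀ i j, o j < o i → o i < c j → c i < c j) {P Q : ι → ℕ}
    (hP : ∀ i, L[P i]? = some (o i, true)) (hQ : ∀ i, L[Q i]? = some (c i, false)) :
    ∃ T : BinTree, L.map Prod.snd = T.bp ∧ ∃ φ : ι → List Bool,
      (∀ i, (BinTree.parenList T)[P i]? = some (φ i, true)) ∧
      (∀ i, (BinTree.parenList T)[Q i]? = some (φ i, false)) ∧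
      ∀ x e, (BinTree.parenList T)[x]? = some e →
        ∃ k, x = P k ∧ e = (φ k, true) ∨ x = Q k ∧ e = (φ k, false) := by
  have hnd : L.Nodup := hs.nodup.of_map _
  obtain ⟨T, hT⟩ := (hL.balancedBP_map_snd hs hoc).exists_bp_eq
  have hsnd (x : ℕ) : ((BinTree.parenList T)[x]?).map Prod.snd = L[x]?.map Prod.snd := by
    rw [← List.getElem?_map, ← List.getElem?_map, BinTree.map_snd_parenList, hT]
  have hopen i : ∃ q, (BinTree.parenList T)[P i]? = some (q, true) := by
    have := hsnd (P i)
    rw [hP i] at this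
    obtain ⟨⟨q, b⟩, he, rfl⟩ := Option.map_eq_some_iff.mp this
    exact ⟨q, he⟩
  choose φ hφP using hopen
  have hφQ i : (BinTree.parenList T)[Q i]? = some (φ i, false) := by
    obtain ⟨y, hy⟩ := List.mem_iff_getElem?.mp
      (BinTree.mem_parenList.mpr (BinTree.validPath_of_getElem? (hφP i)) : (φ i, false) ∈ _)
    have hmatch := BinTree.isMatch_of_getElem? (hφP i) hy
    rw [hT] at hmatch
    rwa [hmatch.right_unique (hL.isMatch hs hoc hnest (hP i) (hQ i))] at hy
  refine ⟨T, hT.symm, φ, hφP, hφQ, fun x e hx => ?_⟩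
  have hlen := (List.getElem?_eq_some_iff.mp hx).1
  rw [BinTree.length_parenList, hT, List.length_map] at hlen
  have hxL := List.getElem?_eq_getElem hlen
  obtain ⟨k, hk | hk⟩ := hL.mem_iff.mp (List.getElem_mem hlen) <;> rw [hk] at hxL
  · obtain rfl := hnd.eq_of_getElem?_eq_some hxL (hP k)
    exact ⟨k, Or.inl ⟨rfl, Option.some_inj.mp (hx.symm.trans (hφP k))⟩⟩
  · obtain rfl := hnd.eq_of_getElem?_eq_some hxL (hQ k)
    exact ⟨k, Or.inr ⟨rfl, Option.some_inj.mp (hx.symm.trans (hφQ k))⟩⟩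

theorem IsTokenList.exists_tree (hL : IsTokenList o c L) (hs : (L.map Prod.fst).SortedLT)
    (hoc : ∀ i, o i < c i) (hnest : ∀ i j, o j < o i → o i < c j → c i < c j) :
    ∃ T : BinTree, L.map Prod.snd = T.bp ∧ ∃ φ : ι → List Bool, Function.Injective φ ∧
      (∀ i, T.ValidPath (φ i)) ∧ (∀ q, T.ValidPath q → ∃ i, φ i = q) ∧
      ∀ i j, (∃ bb, φ i = φ j ++ [bb]) ↔
        [(o j, true), (o i, true)] <:+: L ∨ [(c j, false), (o i, true)] <:+: L := by
  have hnd : L.Nodup := hs.nodup.of_map _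
  choose P hP using fun i => List.mem_iff_getElem?.mp (hL.mem_iff.mpr ⟨i, Or.inl rfl⟩)
  choose Q hQ using fun i => List.mem_iff_getElem?.mp (hL.mem_iff.mpr ⟨i, Or.inr rfl⟩)
  obtain ⟨T, hT, φ, hφP, hφQ, hparen⟩ := hL.exists_tree_open_close hs hoc hnest hP hQ
  have hφinj : Function.Injective φ := fun i j h => by
    have hPij := (BinTree.nodup_parenList T).eq_of_getElem?_eq_some (hφP i) (h ▸ hφP j)
    exact (hL.injective_and_ne hs.nodup).1 (by simpa [hPij, hP j] using (hP i).symm)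
  refine ⟨T, hT, φ, hφinj, fun i => BinTree.validPath_of_getElem? (hφP i), fun q hq => ?_,
    fun i j => ?_⟩
  · obtain ⟨x, hx⟩ := List.mem_iff_getElem?.mp (BinTree.mem_parenList.mpr hq : (q, true) ∈ _)
    obtain ⟨k, ⟨-, hk⟩ | ⟨-, hk⟩⟩ := hparen x _ hx <;> simp only [Prod.mk.injEq] at hk
    exacts [⟨k, hk.1.symm⟩, absurd hk.2 Bool.true_eq_false.le]
  have hφj x b : (BinTree.parenList T)[x]? = some (φ j, b) ↔
      b = true ∧ x = P j ∨ b = false ∧ x = Q j := by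
    refine ⟨fun hx => ?_, ?_⟩
    · obtain ⟨k, ⟨rfl, hk⟩ | ⟨rfl, hk⟩⟩ := hparen x _ hx <;>
        obtain ⟨hjk, rfl⟩ := Prod.mk.inj hk <;> obtain rfl := hφinj hjk <;> simp
    · rintro (⟨rfl, rfl⟩ | ⟨rfl, rfl⟩)
      exacts [hφP j, hφQ j]
  rw [BinTree.exists_eq_append_iff (hφP i), List.pair_infix_iff, List.pair_infix_iff]
  simp only [hφj, hnd.getElem?_eq_some_iff (hP _), hnd.getElem?_eq_some_iff (hQ _)]
  constructor
  · rintro ⟨x, b, ⟨-, rfl⟩ | ⟨-, rfl⟩, h⟩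
    exacts [Or.inl ⟨_, rfl, h.symm⟩, Or.inr ⟨_, rfl, h.symm⟩]
  · rintro (⟨_, rfl, h⟩ | ⟨_, rfl, h⟩)
    exacts [⟨_, true, Or.inl ⟨rfl, rfl⟩, h.symm⟩,
      ⟨_, false, Or.inr ⟨rfl, rfl⟩, h.symm⟩]

end NonCrossing

section Chunks

variable {ι : Type*} {a b c d : ι → ℕ}

def chunks (a b c d : ι → ℕ) (i : ι) : Set ℕ := Set.Ico (a i) (b i) ∪ Set.Ico (c i) (d i)

def openKey (a : ι → ℕ) (i : ι) : ℕ := 2 * a i + 1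

def closeKey (c d : ι → ℕ) (i : ι) : ℕ := if c i = d i then 2 * c i else 2 * c i + 1

structure IsChunkSystem (a b c d : ι → ℕ) : Prop where
  left_lt : ∀ i, a i < b i
  right_le : ∀ i, b i ≤ c i ∧ c i ≤ d i
  zero_width : ∀ i, c i = d i → c i = b i
  disjoint : ∀ i j x, x ∈ chunks a b c d i → x ∈ chunks a b c d j → i = j

theorem exists_key_of_mem_chunks {k : ι} {x : ℕ} (hx : x ∈ chunks a b c d k) :
    ∃ s ≤ x, (2 * s + 1 = openKey a k ∨ 2 * s + 1 = closeKey c d k) ∧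
      ∀ s', s ≤ s' → s' ≤ x → s' ∈ chunks a b c d k := by
  rcases hx with ⟨h1, h2⟩ | ⟨h1, h2⟩
  · exact ⟨a k, h1, Or.inl rfl, fun s' hs' hs'x => Or.inl ⟨hs', by omega⟩⟩
  · refine ⟨c k, h1, Or.inr ?_, fun s' hs' hs'x => Or.inr ⟨hs', by omega⟩⟩
    simp [closeKey, show c k ≠ d k by omega]

namespace IsChunkSystem

theorem openKey_lt_closeKey (h : IsChunkSystem a b c d) (i : ι) :
    openKey a i < closeKey c d i := by
  have := h.left_lt i
  have := h.right_le i
  unfold openKey closeKey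
  split_ifs <;> omega

theorem one_le_key (h : IsChunkSystem a b c d) {i : ι} {w : ℕ}
    (hw : w = openKey a i ∨ w = closeKey c d i) : 1 ≤ w := by
  have := h.left_lt i
  have := h.right_le i
  rcases hw with rfl | rfl <;> simp only [openKey, closeKey] <;> (try split_ifs) <;> omega

theorem le_of_mem_chunks (h : IsChunkSystem a b c d) {i : ι} {x : ℕ}
    (hx : x ∈ chunks a b c d i) : a i ≤ x := by
  have := h.left_lt i
  have := h.right_le i
  rcases hx with hx | hx <;> simp only [Set.mem_Ico] at hx <;> omega

/-- `(w - 1) / 2` recovers a position from a key `w`: the start of a nonempty chunk, or the last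
position of the left chunk for a zero-width right chunk. -/
theorem key_sub_one_div_two_mem (h : IsChunkSystem a b c d) {i : ι} {w : ℕ}
    (hw : w = openKey a i ∨ w = closeKey c d i) : (w - 1) / 2 ∈ chunks a b c d i := by
  have := h.left_lt i
  have := h.right_le i
  have := h.zero_width i
  rcases hw with rfl | rfl <;>
    simp only [chunks, openKey, closeKey, Set.mem_union, Set.mem_Ico] <;> (try split_ifs) <;> omega

theorem eq_of_key_lt (h : IsChunkSystem a b c d) {j k : ι} {x y : ℕ}
    (hx : x ∈ chunks a b c d k) (hy : y = openKey a j ∨ y = closeKey c d j)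
    (hyx : y < 2 * x + 3)
    (himm : ∀ w, (w = openKey a k ∨ w = closeKey c d k) → w ≤ y ∨ 2 * x + 3 ≤ w) :
    j = k := by
  obtain ⟨s, hsx, hsk, hseg⟩ := exists_key_of_mem_chunks hx
  have hsy : 2 * s + 1 ≤ y := (himm _ hsk).resolve_right (by omega)
  exact h.disjoint j k _ (h.key_sub_one_div_two_mem hy) (hseg _ (by omega) (by omega))

theorem closeKey_lt_closeKey (h : IsChunkSystem a b c d)
    (hgap : ∀ i j, i ≠ j → a j < a i → a i < d j →
      chunks a b c d i ⊆ Set.Ico (b j) (c j))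
    (i j : ι) (hji : openKey a j < openKey a i) (hij : openKey a i < closeKey c d j) :
    closeKey c d i < closeKey c d j := by
  have hcd := h.right_le j
  have hzero := h.zero_width j
  have haj : a j < a i := by simp only [openKey] at hji; omega
  have hai : a i < c j := by simp only [openKey, closeKey] at hij; split_ifs at hij <;> omega
  have hin := hgap i j (by rintro rfl; omega) haj (by omega)
  have h1 := hin (h.key_sub_one_div_two_mem (Or.inr rfl))
  have h2 := hin (Or.inl ⟨le_rfl, h.left_lt i⟩)
  have := h.one_le_key (i := i) (Or.inr rfl)
  simp only [closeKey, Set.mem_Ico] at h1 h2 ⊢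
  split_ifs at h1 ⊢ <;> omega

theorem eq_of_pair_infix [Fintype ι] (h : IsChunkSystem a b c d) {L : List (ℕ × Bool)}
    (hL : IsTokenList (openKey a) (closeKey c d) L) (hs : (L.map Prod.fst).SortedLT)
    {i j k : ι} {x : ℕ} (hx : x ∈ chunks a b c d k) (hxi : a i = x + 1) {e : ℕ × Bool}
    (hej : e = (openKey a j, true) ∨ e = (closeKey c d j, false))
    (he : [e, (openKey a i, true)] <:+: L) : j = k := by
  obtain ⟨hlt, himm⟩ := fst_lt_fst_of_pair_infix hs he
  have hxi' : openKey a i = 2 * x + 3 := by simp only [openKey]; omega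
  refine h.eq_of_key_lt hx (y := e.1) (by rcases hej with rfl | rfl <;> simp) (by omega)
    fun w hw => ?_
  rw [← hxi']
  rcases hw with rfl | rfl
  exacts [himm _ (hL.mem_iff.mpr ⟨k, Or.inl rfl⟩), himm _ (hL.mem_iff.mpr ⟨k, Or.inr rfl⟩)]

theorem exists_eq_succ_iff_pair_infix [Fintype ι] (h : IsChunkSystem a b c d)
    {L : List (ℕ × Bool)} (hL : IsTokenList (openKey a) (closeKey c d) L)
    (hs : (L.map Prod.fst).SortedLT) {i j : ι}
    (hcov : ∀ x < a i, ∃ k, x ∈ chunks a b c d k) :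
    (∃ x ∈ chunks a b c d j, a i = x + 1) ↔
      [(openKey a j, true), (openKey a i, true)] <:+: L ∨
        [(closeKey c d j, false), (openKey a i, true)] <:+: L := by
  constructor
  · rintro ⟨x, hx, hxi⟩
    have hlt : openKey a j < openKey a i := by
      have := h.le_of_mem_chunks hx
      simp only [openKey]
      omega
    obtain ⟨e, he⟩ := exists_pair_infix hs (hL.mem_iff.mpr ⟨i, Or.inl rfl⟩)
      (hL.mem_iff.mpr ⟨j, Or.inl rfl⟩) hlt
    obtain ⟨k, hk⟩ := hL.mem_iff.mp (he.subset List.mem_cons_self)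
    obtain rfl := h.eq_of_pair_infix hL hs hx hxi hk he
    rcases hk with rfl | rfl
    exacts [Or.inl he, Or.inr he]
  · intro he
    obtain ⟨e, hej, he⟩ : ∃ e, (e = (openKey a j, true) ∨ e = (closeKey c d j, false)) ∧
        [e, (openKey a i, true)] <:+: L := by
      rcases he with he | he
      exacts [⟨_, Or.inl rfl, he⟩, ⟨_, Or.inr rfl, he⟩]
    have hlt := (fst_lt_fst_of_pair_infix hs he).1
    have hpos := h.one_le_key (i := j) (w := e.1) (by rcases hej with rfl | rfl <;> simp)
    simp only [openKey] at hlt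
    obtain ⟨k, hk⟩ := hcov (a i - 1) (by omega)
    obtain rfl := h.eq_of_pair_infix hL hs hk (by omega) hej he
    exact ⟨_, hk, by omega⟩

end IsChunkSystem

end Chunks

section Decomposition

theorem IsMicroTree.mem_of_prefix {t : BinTree} {M : Set (List Bool)} {r : List Bool}
    (hM : IsMicroTree t M) (hr : r ∈ M) (hroot : ∀ p ∈ M, r <+: p) {p q : List Bool}
    (hp : p ∈ M) (hrq : r <+: q) (hqp : q <+: p) (hq : t.ValidPath q) : q ∈ M := by
  obtain ⟨-, -, r', hr', hr'M⟩ := hM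
  obtain rfl : r' = r := (hr'M r hr).1.eq_of_length_le (hroot r' hr').length_le
  exact (hr'M p hp).2 q hrq hqp hq

theorem IsMicroTree.getElem?_parenList_root {t : BinTree} {M : Set (List Bool)}
    {r : List Bool} {a b c d : ℕ} (hM : IsMicroTree t M) (hr : r ∈ M)
    (hroot : ∀ p ∈ M, r <+: p)
    (hpos : bpPositions t M = Set.Ico a b ∪ Set.Ico c d) (hab : a < b) (hbc : b ≤ c) :
    (BinTree.parenList t)[a]? = some (r, true) := by
  obtain ⟨x₀, hx₀⟩ := List.mem_iff_getElem?.mp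
    (BinTree.mem_parenList.mpr (hM.2.1 r hr) : (r, true) ∈ BinTree.parenList t)
  have hx₀M : x₀ ∈ bpPositions t M := BinTree.mem_bpPositions.mpr ⟨r, hr, true, hx₀⟩
  have haM : a ∈ bpPositions t M := by
    rw [hpos]
    exact Or.inl ⟨le_rfl, hab⟩
  obtain ⟨p, hp, _, hap⟩ := BinTree.mem_bpPositions.mp haM
  have h1 : x₀ ≤ a := BinTree.le_of_prefix hx₀ (hroot p hp) hap
  have h2 : a ≤ x₀ := by
    rw [hpos] at hx₀M
    rcases hx₀M with h | h <;> simp only [Set.mem_Ico] at h <;> omega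
  rwa [le_antisymm h2 h1]

variable {ι : Type*} {t : BinTree} {μ : ι → Set (List Bool)} {r : ι → List Bool}
  {a b c d : ι → ℕ}

theorem isChunkSystem_of_bpPositions (hdisj : ∀ i j, i ≠ j → Disjoint (μ i) (μ j))
    (hchunks : ∀ i, bpPositions t (μ i) = chunks a b c d i) (hleft : ∀ i, a i < b i)
    (horder : ∀ i, b i ≤ c i ∧ c i ≤ d i) (hzero : ∀ i, c i = d i → c i = b i) :
    IsChunkSystem a b c d where
  left_lt := hleft
  right_le := horder
  zero_width := hzero
  disjoint i j x hi hj := by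
    rw [← hchunks, BinTree.mem_bpPositions] at hi hj
    obtain ⟨p, hp, _, hpx⟩ := hi
    obtain ⟨q, hq, _, hqx⟩ := hj
    obtain rfl := BinTree.eq_of_getElem?_parenList hpx hqx
    by_contra hij
    exact Set.disjoint_left.mp (hdisj i j hij) hp hq

/-- The subtree of the root `r i` occupies an interval of positions starting at `a i`; it meets
no chunk of `j`, since a node of `μ j` below `r i` would pull `r i` into `μ j`. -/
theorem chunks_subset_Ico (hmicro : ∀ i, IsMicroTree t (μ i))
    (hroot : ∀ i, r i ∈ μ i ∧ ∀ p ∈ μ i, r i <+: p)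
    (hdisj : ∀ i j, i ≠ j → Disjoint (μ i) (μ j))
    (hchunks : ∀ i, bpPositions t (μ i) = chunks a b c d i) (hsys : IsChunkSystem a b c d)
    (hopen : ∀ i, (BinTree.parenList t)[a i]? = some (r i, true)) (i j : ι) (hij : i ≠ j)
    (hji : a j < a i) (hid : a i < d j) : chunks a b c d i ⊆ Set.Ico (b j) (c j) := by
  obtain ⟨l, r', hu⟩ := BinTree.validPath_of_getElem? (hopen i)
  have hreg y := BinTree.exists_prefix_getElem?_iff (x := y) hu (hopen i)
  have hout y (h1 : a i ≤ y) (h2 : y < a i + (BinTree.node l r').bp.length) :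
      y ∉ chunks a b c d j := by
    intro hy
    obtain ⟨q, _, hiq, hqy⟩ := (hreg y).mpr ⟨h1, h2⟩
    rw [← hchunks, BinTree.mem_bpPositions] at hy
    obtain ⟨q', hq', _, hq'y⟩ := hy
    obtain rfl := BinTree.eq_of_getElem?_parenList hqy hq'y
    rcases List.prefix_or_prefix_of_prefix hiq ((hroot j).2 q hq') with hrij | hrji
    · have := BinTree.le_of_prefix (hopen i) hrij (hopen j)
      omega
    · have := (hmicro j).mem_of_prefix (hroot j).1 (hroot j).2 hq' hrji hiq
        ((hmicro i).2.1 _ (hroot i).1)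
      exact Set.disjoint_left.mp (hdisj i j hij) (hroot i).1 this
  have hai := hout (a i) le_rfl (by simp [BinTree.bp])
  have hbj : b j ≤ a i := not_lt.mp fun h => hai (Or.inl ⟨hji.le, h⟩)
  have hcj : a i < c j := not_le.mp fun h => hai (Or.inr ⟨h, hid⟩)
  have hcd : c j < d j := by
    have := hsys.right_le j
    have := hsys.zero_width j
    omega
  intro x hx
  rw [← hchunks, BinTree.mem_bpPositions] at hx
  obtain ⟨q, hq, _, hqx⟩ := hx
  obtain ⟨h1, h2⟩ := (hreg x).mp ⟨q, _, (hroot i).2 q hq, hqx⟩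
  exact ⟨hbj.trans h1,
    not_le.mp fun hcx => hout (c j) (by omega) (by omega) (Or.inr ⟨le_rfl, hcd⟩)⟩

end Decomposition

theorem contraction_is_topTier_bp_general (t : BinTree) (m : ℕ)
    (μ : Fin m → Set (List Bool)) (r : Fin m → List Bool)
    (hmicro : ∀ i, IsMicroTree t (μ i))
    (hroot : ∀ i, r i ∈ μ i ∧ ∀ p ∈ μ i, r i <+: p)
    (hdisj : ∀ i j, i ≠ j → Disjoint (μ i) (μ j))
    (hcover : ∀ p, BinTree.ValidPath t p → ∃ i, p ∈ μ i)
    (a b c d : Fin m → ℕ)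
    (hchunks : ∀ i, bpPositions t (μ i) = Set.Ico (a i) (b i) ∪ Set.Ico (c i) (d i))
    (hleft : ∀ i, a i < b i)
    (horder : ∀ i, b i ≤ c i ∧ c i ≤ d i)
    (hzero : ∀ i, c i = d i → c i = b i)
    (L : List (ℕ × Bool))
    -- `L` lists all chunks sorted left to right; the key `2 * start + 1` is
    -- used for nonempty chunks and `2 * position` for zero-width right chunks
    -- so that a zero-width right chunk precedes any chunk starting at the same
    -- position.
    (hL : (L : Multiset (ℕ × Bool)) =
        Multiset.map (fun i => (2 * a i + 1, true)) Finset.univ.val +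
        Multiset.map
          (fun i => (if c i = d i then 2 * c i else 2 * c i + 1, false))
          Finset.univ.val)
    (hsorted : (L.map Prod.fst).Pairwise (· < ·)) :
    ∃ T : BinTree, L.map Prod.snd = T.bp ∧
      ∃ φ : Fin m → List Bool,
        Function.Injective φ ∧
        (∀ i, BinTree.ValidPath T (φ i)) ∧
        (∀ q, BinTree.ValidPath T q → ∃ i, φ i = q) ∧
        (∀ i j, (∃ p ∈ μ j, ∃ bb : Bool, r i = p ++ [bb]) ↔
          ∃ bb : Bool, φ i = φ j ++ [bb]) := by
  have hsys := isChunkSystem_of_bpPositions hdisj hchunks hleft horder hzero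
  have hopen i : (BinTree.parenList t)[a i]? = some (r i, true) :=
    (hmicro i).getElem?_parenList_root (hroot i).1 (hroot i).2 (hchunks i) (hleft i) (horder i).1
  have hcov i x (hx : x < a i) : ∃ k, x ∈ chunks a b c d k := by
    have := (List.getElem?_eq_some_iff.mp (hopen i)).1
    obtain ⟨⟨q, bq⟩, hq⟩ : ∃ e, (BinTree.parenList t)[x]? = some e :=
      ⟨_, List.getElem?_eq_getElem (by omega)⟩
    obtain ⟨k, hk⟩ := hcover q (BinTree.validPath_of_getElem? hq)
    have hxk := BinTree.mem_bpPositions.mpr ⟨q, hk, bq, hq⟩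
    rw [hchunks] at hxk
    exact ⟨k, hxk⟩
  have hs := List.sortedLT_iff_pairwise.mpr hsorted
  have hL' : IsTokenList (openKey a) (closeKey c d) L := hL
  obtain ⟨T, hT, φ, hinj, hvalid, hsurj, hchild⟩ := hL'.exists_tree hs hsys.openKey_lt_closeKey
    (hsys.closeKey_lt_closeKey (chunks_subset_Ico hmicro hroot hdisj hchunks hsys hopen))
  refine ⟨T, hT, φ, hinj, hvalid, hsurj, fun i j => ?_⟩
  rw [hchild, ← hsys.exists_eq_succ_iff_pair_infix hL' hs (hcov i), chunks, ← hchunks j]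
  exact BinTree.exists_mem_append_iff (hopen i)

/-- replacing, for each micro tree of a Farzan--Munro
decomposition, its left chunk by `'('` and its right chunk by `')'` (a
zero-width right chunk sitting right after its left chunk) yields the BP
encoding of the top-tier tree: a binary tree whose nodes are in parent-
preserving bijection with the micro trees. -/
theorem contraction_is_topTier_bp (t : BinTree) (m : ℕ)
    (μ : Fin m → Set (List Bool)) (r : Fin m → List Bool)
    (hmicro : ∀ i, IsMicroTree t (μ i))
    (hroot : ∀ i, r i ∈ μ i ∧ ∀ p ∈ μ i, r i <+: p)
    (hdisj : ∀ i j, i ≠ j → Disjoint (μ i) (μ j))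
    (hcover : ∀ p, BinTree.ValidPath t p → ∃ i, p ∈ μ i)
    (hsingle : ∀ i, 2 ≤ (childEdges t (μ i)).ncard → ∃ p, μ i = {p})
    (a b c d : Fin m → ℕ)
    (hchunks : ∀ i, bpPositions t (μ i) = Set.Ico (a i) (b i) ∪ Set.Ico (c i) (d i))
    (hleft : ∀ i, a i < b i)
    (horder : ∀ i, b i ≤ c i ∧ c i ≤ d i)
    (hzero : ∀ i, c i = d i → c i = b i)
    (L : List (ℕ × Bool))
    -- `L` lists all chunks sorted left to right; the key `2 * start + 1` is
    -- used for nonempty chunks and `2 * position` for zero-width right chunks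
    -- so that a zero-width right chunk precedes any chunk starting at the same
    -- position.
    (hL : (L : Multiset (ℕ × Bool)) =
        Multiset.map (fun i => (2 * a i + 1, true)) Finset.univ.val +
        Multiset.map
          (fun i => (if c i = d i then 2 * c i else 2 * c i + 1, false))
          Finset.univ.val)
    (hsorted : (L.map Prod.fst).Pairwise (· < ·)) :
    ∃ T : BinTree, L.map Prod.snd = T.bp ∧
      ∃ φ : Fin m → List Bool,
        Function.Injective φ ∧
        (∀ i, BinTree.ValidPath T (φ i)) ∧
        (∀ q, BinTree.ValidPath T q → ∃ i, φ i = q) ∧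
        (∀ i j, (∃ p ∈ μ j, ∃ bb : Bool, r i = p ++ [bb]) ↔
          ∃ bb : Bool, φ i = φ j ++ [bb]) :=
  contraction_is_topTier_bp_general t m μ r hmicro hroot hdisj hcover a b c d hchunks hleft horder
    hzero L hL hsorted
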